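/- arXiv:1802.02543 — 2 statements merged into one kernel-verified Lean document; each statement's English description precedes it below -/
import Mathlib

section
/- Let α : ℝ → [a,b] ⊂ (0,1) be continuously differentiable with bounded derivative, and let M = sup_ξ |α'(ξ)|/α(ξ)². Then for all y, u, v ∈ ℝ, |sign(y)|y|^{-1/α(v)} − sign(y)|y|^{-1/α(u)}| ≤ M · |v − u| · max{|y|^{-1/a}(1 + |log|y||), |y|^{-1/b}(1 + |log|y||)}. -/
open MeasureTheory Filter Set

noncomputable def spow (r s : ℝ) : ℝ := Real.sign r * |r| ^ s

noncomputable def wab (a b y : ℝ) : ℝ :=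
  max (|y| ^ (-1 / a) * (1 + abs (Real.log (abs y)))) (|y| ^ (-1 / b) * (1 + abs (Real.log (abs y))))

noncomputable def Mconst (α : ℝ → ℝ) : ℝ := ⨆ ξ : ℝ, |deriv α ξ| / (α ξ) ^ 2

/-- Càdlàg on `[t₀,t₁)`: right-continuous on `[t₀,t₁)` and left limits exist on `(t₀,t₁]`. -/
def CadlagOn (f : ℝ → ℝ) (t₀ t₁ : ℝ) : Prop :=
  (∀ u ∈ Set.Ico t₀ t₁, Filter.Tendsto f (nhdsWithin u (Set.Ioi u)) (nhds (f u))) ∧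
  (∀ u ∈ Set.Ioc t₀ t₁, ∃ L, Filter.Tendsto f (nhdsWithin u (Set.Iio u)) (nhds L))

/-- The sum `∑_{(x,y)∈Λ} 1_{(t₀,t]}(x) y^⟨-1/α(f(x₋))⟩`. -/
noncomputable def jumpSum (α : ℝ → ℝ) (Λ : Set (ℝ × ℝ)) (t₀ t : ℝ) (f : ℝ → ℝ) : ℝ :=
  ∑' p : Λ, if (p : ℝ × ℝ).1 ∈ Set.Ioc t₀ t
    then spow (p : ℝ × ℝ).2 (-1 / α (Function.leftLim f (p : ℝ × ℝ).1)) else 0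

/-- The truncated sum over points with `|y| ≤ n`. -/
noncomputable def jumpSumTrunc (α : ℝ → ℝ) (Λ : Set (ℝ × ℝ)) (n : ℝ) (t₀ t : ℝ) (f : ℝ → ℝ) : ℝ :=
  ∑' p : Λ, if |(p : ℝ × ℝ).2| ≤ n ∧ (p : ℝ × ℝ).1 ∈ Set.Ioc t₀ t
    then spow (p : ℝ × ℝ).2 (-1 / α (Function.leftLim f (p : ℝ × ℝ).1)) else 0

/-!
For `y ≠ 0` the map `ξ ↦ |y| ^ (-1 / α ξ)` has derivative `|y| ^ (-1 / α ξ) · log |y| · α' ξ / α ξ ^ 2`.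
Since the exponent `-1 / α ξ` lies in `[-1/a, -1/b]`, the power `|y| ^ (-1 / α ξ)` is at most the larger
of `|y| ^ (-1/a)` and `|y| ^ (-1/b)`, so the derivative is bounded by `M · |y|^{-1/(a,b)}`, and the
mean value theorem gives the estimate. The sign factor of `y^⟨s⟩` does not depend on `s`.
-/

lemma abs_spow_sub_spow_of_ne_zero {y : ℝ} (hy : y ≠ 0) (s t : ℝ) :
    |spow y s - spow y t| = |(|y| ^ s - |y| ^ t)| := by
  rw [spow, spow, ← mul_sub, abs_mul]
  rcases Real.sign_apply_eq_of_ne_zero y hy with h | h <;> simp [h]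

lemma Real.rpow_le_max_of_mem_Icc {c p q s : ℝ} (hc : 0 < c) (hs : s ∈ Icc p q) :
    c ^ s ≤ max (c ^ p) (c ^ q) := by
  rcases le_total c 1 with h | h
  · exact le_max_of_le_left (Real.rpow_le_rpow_of_exponent_ge hc h hs.1)
  · exact le_max_of_le_right (Real.rpow_le_rpow_of_exponent_le h hs.2)

lemma neg_one_div_mem_Icc {a b x : ℝ} (ha : 0 < a) (hx : x ∈ Icc a b) :
    -1 / x ∈ Icc (-1 / a) (-1 / b) := by
  have hx0 : 0 < x := ha.trans_le hx.1
  simp only [mem_Icc, neg_div, neg_le_neg_iff]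
  exact ⟨one_div_le_one_div_of_le ha hx.1, one_div_le_one_div_of_le hx0 hx.2⟩

lemma wab_nonneg (a b y : ℝ) : 0 ≤ wab a b y :=
  le_max_of_le_left (by positivity)

lemma rpow_neg_one_div_mul_abs_log_le_wab {a b x y : ℝ} (ha : 0 < a) (hx : x ∈ Icc a b)
    (hy : y ≠ 0) : |y| ^ (-1 / x) * |Real.log (|y|)| ≤ wab a b y := by
  have hlog : 0 ≤ 1 + |Real.log (|y|)| := by positivity
  rw [wab, ← max_mul_of_nonneg _ _ hlog]
  gcongr
  · exact Real.rpow_le_max_of_mem_Icc (abs_pos.2 hy) (neg_one_div_mem_Icc ha hx)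
  · linarith

lemma HasDerivAt.const_rpow_neg_one_div {α : ℝ → ℝ} {α' c ξ : ℝ} (hα : HasDerivAt α α' ξ)
    (hαξ : α ξ ≠ 0) (hc : 0 < c) :
    HasDerivAt (fun ξ => c ^ (-1 / α ξ)) (c ^ (-1 / α ξ) * Real.log c * (α' / α ξ ^ 2)) ξ := by
  have hexp : HasDerivAt (fun ξ => -1 / α ξ) (α' / α ξ ^ 2) ξ :=
    ((hasDerivAt_const ξ (-1 : ℝ)).div hα hαξ).congr_deriv (by ring)
  exact ((Real.hasStrictDerivAt_const_rpow hc _).hasDerivAt.comp ξ hexp).congr_deriv (by ring)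

section Mconst

variable {α : ℝ → ℝ} {a : ℝ}

lemma Mconst_nonneg : 0 ≤ Mconst α :=
  Real.iSup_nonneg fun _ => by positivity

lemma bddAbove_range_abs_deriv_div_sq (ha : 0 < a) (hα : ∀ x, a ≤ α x)
    (hbd : ∃ C, ∀ x, |deriv α x| ≤ C) :
    BddAbove (range fun ξ => |deriv α ξ| / α ξ ^ 2) := by
  obtain ⟨C, hC⟩ := hbd
  refine ⟨C / a ^ 2, forall_mem_range.2 fun ξ => ?_⟩
  have hsq : a ^ 2 ≤ α ξ ^ 2 := pow_le_pow_left₀ ha.le (hα ξ) 2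
  exact div_le_div₀ ((abs_nonneg _).trans (hC 0)) (hC ξ) (by positivity) hsq

lemma abs_deriv_div_sq_le_Mconst (ha : 0 < a) (hα : ∀ x, a ≤ α x)
    (hbd : ∃ C, ∀ x, |deriv α x| ≤ C) (ξ : ℝ) : |deriv α ξ| / α ξ ^ 2 ≤ Mconst α :=
  le_ciSup (bddAbove_range_abs_deriv_div_sq ha hα hbd) ξ

end Mconst

theorem stmt0_general (a b : ℝ) (ha : 0 < a)
    (α : ℝ → ℝ) (hrange : ∀ x, α x ∈ Set.Icc a b) (hsmooth : ContDiff ℝ 1 α)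
    (hbd : ∃ C, ∀ x, |deriv α x| ≤ C) (y u v : ℝ) :
    |spow y (-1 / α v) - spow y (-1 / α u)| ≤ Mconst α * |v - u| * wab a b y := by
  rcases eq_or_ne y 0 with rfl | hy
  · simpa [spow] using mul_nonneg (mul_nonneg Mconst_nonneg (abs_nonneg _)) (wab_nonneg a b 0)
  have hα0 : ∀ ξ, α ξ ≠ 0 := fun ξ => (ha.trans_le (hrange ξ).1).ne'
  have hderiv : ∀ ξ, HasDerivAt (fun ξ => |y| ^ (-1 / α ξ))
      (|y| ^ (-1 / α ξ) * Real.log |y| * (deriv α ξ / α ξ ^ 2)) ξ := fun ξ =>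
    ((hsmooth.differentiable one_ne_zero) ξ).hasDerivAt.const_rpow_neg_one_div (hα0 ξ)
      (abs_pos.2 hy)
  have hbound : ∀ ξ, ‖|y| ^ (-1 / α ξ) * Real.log |y| * (deriv α ξ / α ξ ^ 2)‖
      ≤ wab a b y * Mconst α := fun ξ => by
    rw [Real.norm_eq_abs, abs_mul, abs_mul, abs_div, abs_of_nonneg (Real.rpow_nonneg
      (abs_nonneg y) _), abs_of_nonneg (sq_nonneg (α ξ))]
    exact mul_le_mul (rpow_neg_one_div_mul_abs_log_le_wab ha (hrange ξ) hy)
      (abs_deriv_div_sq_le_Mconst ha (fun x => (hrange x).1) hbd ξ) (by positivity)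
      (wab_nonneg a b y)
  have hmvt := convex_univ.norm_image_sub_le_of_norm_hasDerivWithin_le
    (fun ξ _ => (hderiv ξ).hasDerivWithinAt) (fun ξ _ => hbound ξ) (mem_univ u) (mem_univ v)
  rw [abs_spow_sub_spow_of_ne_zero hy]
  calc _ ≤ wab a b y * Mconst α * |v - u| := by simpa only [Real.norm_eq_abs] using hmvt
    _ = Mconst α * |v - u| * wab a b y := by ring

/-- Mean value estimate: `|y^⟨-1/α(v)⟩ - y^⟨-1/α(u)⟩| ≤ M |v-u| |y|^{-1/(a,b)}`. -/
theorem stmt0 (a b : ℝ) (ha : 0 < a) (hab : a < b) (hb1 : b < 1)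
    (α : ℝ → ℝ) (hrange : ∀ x, α x ∈ Set.Icc a b) (hsmooth : ContDiff ℝ 1 α)
    (hbd : ∃ C, ∀ x, |deriv α x| ≤ C) (y u v : ℝ) :
    |spow y (-1 / α v) - spow y (-1 / α u)| ≤ Mconst α * |v - u| * wab a b y :=
  stmt0_general a b ha α hrange hsmooth hbd y u v
end

section
/- Let Π ⊂ (t₀,t₁) × ℝ be countable with Σ_{(x,y)∈Π} |y|^{-1/b'} < ∞ for some b < b' < 1, let α : ℝ → [a,b] be continuously differentiable with bounded derivative, and a₀ ∈ ℝ. Define K on the space D[t₀,t₁) of càdlàg functions by K(f)(t) = a₀ + Σ_{(x,y)∈Π} 1_{(t₀,t]}(x) y^⟨−1/α(f(x₋))⟩. Then K maps D[t₀,t₁) into itself, i.e. K(f) is right-continuous with left limits on [t₀,t₁). -/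
open MeasureTheory Filter Set

/-! The jumps of `K(f)` are `y^⟨-1/α(f(x₋))⟩` with `α ≤ b < b'`; since `|y|^(-1/b')` is summable,
all but finitely many `|y|` exceed `1`, and there `|y|^(-1/α) ≤ |y|^(-1/b')`. So the jumps are
absolutely summable, and dominated convergence passes right continuity and left limits of the
single step functions `1_{(t₀,t]}(x)` to the sum. -/

open scoped Topology

lemma abs_spow_le (r s : ℝ) : |spow r s| ≤ |r| ^ s := by
  rw [spow, abs_mul, abs_of_nonneg (Real.rpow_nonneg (abs_nonneg r) s)]
  refine mul_le_of_le_one_left (Real.rpow_nonneg (abs_nonneg r) s) ?_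
  rcases Real.sign_apply_eq r with h | h | h <;> simp [h]

lemma summable_norm_spow_of_summable_rpow {ι : Type*} {y e : ι → ℝ} {β : ℝ} (hβ : 0 < β)
    (he : ∀ i, 0 < e i ∧ e i ≤ β) (hy : Summable fun i => |y i| ^ (-1 / β)) :
    Summable fun i => ‖spow (y i) (-1 / e i)‖ := by
  have hneg : -1 / β < 0 := div_neg_of_neg_of_pos neg_one_lt_zero hβ
  refine .of_norm_bounded_eventually hy ?_
  filter_upwards [hy.tendsto_cofinite_zero.eventually (eventually_lt_nhds one_pos)] with i hi
  rw [norm_norm, Real.norm_eq_abs]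
  rcases eq_or_ne (y i) 0 with hzero | hne
  · simp [hzero, spow, Real.rpow_nonneg]
  have hy1 : 1 ≤ |y i| := by
    by_contra! hlt
    exact hi.not_ge (Real.one_le_rpow_of_pos_of_le_one_of_nonpos (abs_pos.mpr hne) hlt.le hneg.le)
  have hexp : -1 / e i ≤ -1 / β := by
    rw [neg_div, neg_div, neg_le_neg_iff]
    exact one_div_le_one_div_of_le (he i).1 (he i).2
  exact (abs_spow_le _ _).trans (Real.rpow_le_rpow_of_exponent_le hy1 hexp)

lemma eventually_mem_Ioc_iff_nhdsGT (t₀ u x : ℝ) :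
    ∀ᶠ t in 𝓝[>] u, (x ∈ Ioc t₀ t ↔ x ∈ Ioc t₀ u) := by
  rcases le_or_gt x u with hx | hx
  · filter_upwards [self_mem_nhdsWithin] with t (ht : u < t)
    simp only [mem_Ioc]
    exact and_congr_right fun _ => ⟨fun _ => hx, fun _ => hx.trans ht.le⟩
  · filter_upwards [inter_mem_nhdsWithin (Ioi u) (Iio_mem_nhds hx)] with t ht
    simp only [mem_Ioc]
    exact and_congr_right fun _ => iff_of_false ht.2.not_ge hx.not_ge

lemma eventually_mem_Ioc_iff_nhdsLT (t₀ u x : ℝ) :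
    ∀ᶠ t in 𝓝[<] u, (x ∈ Ioc t₀ t ↔ x ∈ Ioo t₀ u) := by
  rcases lt_or_ge x u with hx | hx
  · filter_upwards [inter_mem_nhdsWithin (Iio u) (Ioi_mem_nhds hx)] with t ht
    simp only [mem_Ioc, mem_Ioo]
    exact and_congr_right fun _ => ⟨fun _ => hx, fun _ => ht.2.le⟩
  · filter_upwards [self_mem_nhdsWithin] with t (ht : t < u)
    simp only [mem_Ioc, mem_Ioo]
    exact and_congr_right fun _ => iff_of_false (ht.trans_le hx).not_ge hx.not_gt

section JumpFunction

variable {ι G : Type*} [NormedAddCommGroup G] [CompleteSpace G] {c : ι → G}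

lemma tendsto_tsum_ite_of_eventually_iff {α : Type*} {l : Filter α} {P : α → ι → Prop}
    {Q : ι → Prop} [∀ t i, Decidable (P t i)] [∀ i, Decidable (Q i)]
    (hc : Summable fun i => ‖c i‖) (hPQ : ∀ i, ∀ᶠ t in l, (P t i ↔ Q i)) :
    Tendsto (fun t => ∑' i, if P t i then c i else 0) l (𝓝 (∑' i, if Q i then c i else 0)) := by
  refine tendsto_tsum_of_dominated_convergence hc (fun i => ?_) (.of_forall fun t i => ?_)
  · exact tendsto_const_nhds.congr' ((hPQ i).mono fun t h => by simp only [h])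
  · split_ifs <;> simp

variable (x : ι → ℝ) (t₀ : ℝ)

lemma tendsto_tsum_jumps_nhdsGT (hc : Summable fun i => ‖c i‖) (u : ℝ) :
    Tendsto (fun t => ∑' i, if x i ∈ Ioc t₀ t then c i else 0) (𝓝[>] u)
      (𝓝 (∑' i, if x i ∈ Ioc t₀ u then c i else 0)) :=
  tendsto_tsum_ite_of_eventually_iff hc fun i => eventually_mem_Ioc_iff_nhdsGT t₀ u (x i)

lemma tendsto_tsum_jumps_nhdsLT (hc : Summable fun i => ‖c i‖) (u : ℝ) :
    Tendsto (fun t => ∑' i, if x i ∈ Ioc t₀ t then c i else 0) (𝓝[<] u)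
      (𝓝 (∑' i, if x i ∈ Ioo t₀ u then c i else 0)) :=
  tendsto_tsum_ite_of_eventually_iff hc fun i => eventually_mem_Ioc_iff_nhdsLT t₀ u (x i)

end JumpFunction

lemma cadlagOn_tsum_jumps {ι : Type*} (x c : ι → ℝ) (t₀ t₁ : ℝ)
    (hc : Summable fun i => ‖c i‖) :
    CadlagOn (fun t => ∑' i, if x i ∈ Ioc t₀ t then c i else 0) t₀ t₁ :=
  ⟨fun u _ => tendsto_tsum_jumps_nhdsGT x t₀ hc u,
    fun u _ => ⟨_, tendsto_tsum_jumps_nhdsLT x t₀ hc u⟩⟩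

lemma CadlagOn.const_add {f : ℝ → ℝ} {t₀ t₁ : ℝ} (hf : CadlagOn f t₀ t₁) (a : ℝ) :
    CadlagOn (fun t => a + f t) t₀ t₁ :=
  ⟨fun u hu => (hf.1 u hu).const_add a,
    fun u hu => let ⟨L, hL⟩ := hf.2 u hu; ⟨a + L, hL.const_add a⟩⟩

theorem stmt2_general (a b b' t₀ t₁ a₀ : ℝ) (ha : 0 < a) (hab : a < b) (hbb' : b < b')
    (α : ℝ → ℝ) (hrange : ∀ x, α x ∈ Set.Icc a b)
    (Λ : Set (ℝ × ℝ))
    (hΛ : Summable fun p : Λ => |(p : ℝ × ℝ).2| ^ (-1 / b'))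
    (f : ℝ → ℝ) :
    CadlagOn (fun t => a₀ + jumpSum α Λ t₀ t f) t₀ t₁ := by
  have hexp : ∀ p : Λ, 0 < α (Function.leftLim f (p : ℝ × ℝ).1) ∧
      α (Function.leftLim f (p : ℝ × ℝ).1) ≤ b' :=
    fun p => ⟨ha.trans_le (hrange _).1, (hrange _).2.trans hbb'.le⟩
  have hsum := summable_norm_spow_of_summable_rpow (ha.trans (hab.trans hbb')) hexp hΛ
  exact (cadlagOn_tsum_jumps _ _ t₀ t₁ hsum).const_add a₀

/-- The operator K maps the càdlàg functions on [t₀,t₁) into themselves. -/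
theorem stmt2 (a b b' t₀ t₁ a₀ : ℝ) (ha : 0 < a) (hab : a < b) (hbb' : b < b') (hb1 : b' < 1)
    (ht : t₀ < t₁)
    (α : ℝ → ℝ) (hrange : ∀ x, α x ∈ Set.Icc a b) (hsmooth : ContDiff ℝ 1 α)
    (hbd : ∃ C, ∀ x, |deriv α x| ≤ C)
    (Λ : Set (ℝ × ℝ)) (hcount : Λ.Countable)
    (hsubΛ : Λ ⊆ Set.Ioo t₀ t₁ ×ˢ (Set.univ : Set ℝ))
    (hΛ : Summable fun p : Λ => |(p : ℝ × ℝ).2| ^ (-1 / b'))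
    (f : ℝ → ℝ) (hf : CadlagOn f t₀ t₁) :
    CadlagOn (fun t => a₀ + jumpSum α Λ t₀ t f) t₀ t₁ :=
  stmt2_general a b b' t₀ t₁ a₀ ha hab hbb' α hrange Λ hΛ f
end
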